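/- If the matrix G = E[(1/n²) Σ_i Σ_{i' : N_i ∩ N_{i'} ≠ ∅} ω_i ω_{i'} X_i X_{i'}ᵀ] is invertible, then the VIM adjustment coefficient estimator is unbiased for its population counterpart: E[θ̂_VIM] = θ_VIM. -/

import Mathlib

noncomputable section

namespace SNIPE

open Finset

/-- The collection `S_i^β` of subsets of the in-neighborhood of unit `i` of size at most `β`. -/
def Sb (n β : ℕ) (Nb : Fin n → Finset (Fin n)) (i : Fin n) : Finset (Finset (Fin n)) :=
  (Nb i).powerset.filter fun s => s.card ≤ β

/-- `g(S) = ∏_{j∈S}(1-p_j) - ∏_{j∈S}(-p_j)`. -/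
def gcoef {n : ℕ} (prob : Fin n → ℝ) (s : Finset (Fin n)) : ℝ :=
  (∏ j ∈ s, (1 - prob j)) - ∏ j ∈ s, (-prob j)

/-- The SNIPE weight `ω_i`, as a function of the treatment realization `z`. -/
def wt (n β : ℕ) (Nb : Fin n → Finset (Fin n)) (prob : Fin n → ℝ) (i : Fin n)
    (z : Fin n → ℝ) : ℝ :=
  ∑ s ∈ Sb n β Nb i, gcoef prob s * ∏ j ∈ s, (z j - prob j) / (prob j * (1 - prob j))

/-- The β-order interaction potential-outcome model `Y_i(z) = ∑_{S∈S_i^β} α_{i,S} ∏_{j∈S} z_j`. -/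
def Ypot (n β : ℕ) (Nb : Fin n → Finset (Fin n)) (α : Fin n → Finset (Fin n) → ℝ)
    (i : Fin n) (z : Fin n → ℝ) : ℝ :=
  ∑ s ∈ Sb n β Nb i, α i s * ∏ j ∈ s, z j

/-- The coefficient estimator `α̂_{i,S}`, where `Yval` is the observed outcome of unit `i`. -/
def alphaHat (n β : ℕ) (Nb : Fin n → Finset (Fin n)) (prob : Fin n → ℝ)
    (Yval : ℝ) (i : Fin n) (s : Finset (Fin n)) (z : Fin n → ℝ) : ℝ :=
  Yval * (∏ j ∈ s, (-1 / prob j)) *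
    ∑ u ∈ (Sb n β Nb i).filter (fun u => s ⊆ u), ∏ l ∈ u, (prob l - z l) / (1 - prob l)

/-- The ℓ2 norm of a finite real vector. -/
def l2 {d : ℕ} (v : Fin d → ℝ) : ℝ := Real.sqrt (∑ k, v k ^ 2)

/-- The covariance of two real random variables. -/
def covr {Ω : Type*} [MeasurableSpace Ω] (μ : MeasureTheory.Measure Ω) (f h : Ω → ℝ) : ℝ :=
  (∫ x, f x * h x ∂μ) - (∫ x, f x ∂μ) * ∫ x, h x ∂μ

/-- A randomized experiment on a population of `n` units joined by a directed interference
network with all self-loops: treatments `Z_i` are mutually independent `Bernoulli(p_i)` random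
variables with `p_i ∈ [p, 1-p]`, outcomes follow the `β`-order interaction model with
coefficients `α`, and each unit carries a deterministic covariate vector `X_i ∈ ℝ^{dX}`. -/
structure Setting (β dX : ℕ) (p : ℝ) where
  n : ℕ
  Ω : Type
  [mΩ : MeasurableSpace Ω]
  μ : MeasureTheory.Measure Ω
  isProb : MeasureTheory.IsProbabilityMeasure μ
  prob : Fin n → ℝ
  prob_mem : ∀ i, p ≤ prob i ∧ prob i ≤ 1 - p
  Z : Fin n → Ω → ℝ
  Z_meas : ∀ i, Measurable (Z i)
  Z_indep : ProbabilityTheory.iIndepFun Z μ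
  Z_range : ∀ i x, Z i x = 0 ∨ Z i x = 1
  Z_prob : ∀ i, μ (Z i ⁻¹' {1}) = ENNReal.ofReal (prob i)
  Nb : Fin n → Finset (Fin n)
  self_mem : ∀ i, i ∈ Nb i
  α : Fin n → Finset (Fin n) → ℝ
  X : Fin n → Fin dX → ℝ

attribute [instance] Setting.mΩ

open MeasureTheory ProbabilityTheory Filter Topology

namespace Setting

variable {β dX : ℕ} {p : ℝ}

/-- The SNIPE weight `ω_i` as a random variable. -/
def w (St : Setting β dX p) (i : Fin St.n) (x : St.Ω) : ℝ :=
  wt St.n β St.Nb St.prob i fun j => St.Z j x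

/-- The observed outcome `Y_i = Y_i(Z)`. -/
def Yo (St : Setting β dX p) (i : Fin St.n) (x : St.Ω) : ℝ :=
  Ypot St.n β St.Nb St.α i fun j => St.Z j x

/-- The total treatment effect `TTE = (1/n) ∑_i (Y_i(1) - Y_i(0))`. -/
def tte (St : Setting β dX p) : ℝ :=
  (St.n : ℝ)⁻¹ * ∑ i,
    (Ypot St.n β St.Nb St.α i (fun _ => 1) - Ypot St.n β St.Nb St.α i fun _ => 0)

/-- The covariate-adjusted SNIPE estimator `TTÊ(θ) = (1/n) ∑_i ω_i (Y_i - θᵀ X_i)`. -/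
def tteHat (St : Setting β dX p) (θ : Fin dX → ℝ) (x : St.Ω) : ℝ :=
  (St.n : ℝ)⁻¹ * ∑ i, St.w i x * (St.Yo i x - ∑ k, θ k * St.X i k)

/-- Expectation with respect to the design measure. -/
def E (St : Setting β dX p) (f : St.Ω → ℝ) : ℝ := ∫ x, f x ∂St.μ

/-- The units `i'` whose in-neighborhood intersects that of `i`. -/
def nbrs (St : Setting β dX p) (i : Fin St.n) : Finset (Fin St.n) :=
  univ.filter fun i' => (St.Nb i ∩ St.Nb i').Nonempty

/-- The coefficient estimator `α̂_{i,S}` as a random variable. -/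
def ahat (St : Setting β dX p) (i : Fin St.n) (s : Finset (Fin St.n)) (x : St.Ω) : ℝ :=
  alphaHat St.n β St.Nb St.prob (St.Yo i x) i s fun j => St.Z j x

/-- The Gram matrix `(1/n) ∑_i ω_i² X_i X_iᵀ` (a random matrix). -/
def regGramAt (St : Setting β dX p) (x : St.Ω) : Matrix (Fin dX) (Fin dX) ℝ :=
  Matrix.of fun k l : Fin dX => (St.n : ℝ)⁻¹ * ∑ i, St.w i x ^ 2 * St.X i k * St.X i l

/-- `E[(1/n) ∑_i ω_i² X_i X_iᵀ]`. -/
def regGram (St : Setting β dX p) : Matrix (Fin dX) (Fin dX) ℝ :=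
  Matrix.of fun k l : Fin dX =>
    St.E fun x => (St.n : ℝ)⁻¹ * ∑ i, St.w i x ^ 2 * St.X i k * St.X i l

/-- The regression-based adjustment coefficient estimator `θ̂_Reg`. -/
def thetaHatReg (St : Setting β dX p) (x : St.Ω) : Fin dX → ℝ :=
  Matrix.mulVec (St.regGramAt x)⁻¹
    fun k => (St.n : ℝ)⁻¹ * ∑ i, St.w i x ^ 2 * St.X i k * St.Yo i x

/-- The population regression-based adjustment coefficient `θ_Reg`. -/
def thetaReg (St : Setting β dX p) : Fin dX → ℝ :=
  Matrix.mulVec St.regGram⁻¹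
    fun k => St.E fun x => (St.n : ℝ)⁻¹ * ∑ i, St.w i x ^ 2 * St.X i k * St.Yo i x

/-- The matrix `G = E[(1/n²) ∑_i ∑_{i' : N_i ∩ N_{i'} ≠ ∅} ω_i ω_{i'} X_i X_{i'}ᵀ]`. -/
def Gmat (St : Setting β dX p) : Matrix (Fin dX) (Fin dX) ℝ :=
  Matrix.of fun k l : Fin dX => St.E fun x =>
    (((St.n : ℝ)) ^ 2)⁻¹ * ∑ i, ∑ i' ∈ St.nbrs i, St.w i x * St.w i' x * St.X i k * St.X i' l

/-- `E[(1/n) ∑_{i' : N_i ∩ N_{i'} ≠ ∅} ω_i ω_{i'} X_{i'} ∏_{k∈S} Z_k]`. -/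
def vimE (St : Setting β dX p) (i : Fin St.n) (s : Finset (Fin St.n)) (k : Fin dX) : ℝ :=
  St.E fun x =>
    (St.n : ℝ)⁻¹ * ∑ i' ∈ St.nbrs i, St.w i x * St.w i' x * St.X i' k * ∏ t ∈ s, St.Z t x

/-- The VIM adjustment coefficient estimator `θ̂_VIM`. -/
def thetaHatVIM (St : Setting β dX p) (x : St.Ω) : Fin dX → ℝ :=
  Matrix.mulVec St.Gmat⁻¹ fun k =>
    (St.n : ℝ)⁻¹ * ∑ i, ∑ s ∈ Sb St.n β St.Nb i, St.ahat i s x * St.vimE i s k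

/-- The population VIM adjustment coefficient `θ_VIM`. -/
def thetaVIM (St : Setting β dX p) : Fin dX → ℝ :=
  Matrix.mulVec St.Gmat⁻¹ fun k => St.E fun x =>
    (((St.n : ℝ)) ^ 2)⁻¹ * ∑ i, ∑ i' ∈ St.nbrs i, St.w i x * St.w i' x * St.X i k * St.Yo i' x

/-- The matrix `M` with `M_{ii'} = ∑_{S ∈ S_i^β ∩ S_{i'}^β} g(S)² ∏_{j∈S} 1/(p_j(1-p_j))`. -/
def Mmat (St : Setting β dX p) : Matrix (Fin St.n) (Fin St.n) ℝ :=
  Matrix.of fun i i' : Fin St.n => ∑ s ∈ Sb St.n β St.Nb i ∩ Sb St.n β St.Nb i',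
    gcoef St.prob s ^ 2 * ∏ j ∈ s, (St.prob j * (1 - St.prob j))⁻¹

/-- The matrix `(1/n) Xᵀ M X`. -/
def XtMX (St : Setting β dX p) : Matrix (Fin dX) (Fin dX) ℝ :=
  Matrix.of fun k l : Fin dX => (St.n : ℝ)⁻¹ * ∑ i, ∑ i', St.X i k * St.Mmat i i' * St.X i' l

/-- Potential outcome under the all-ones assignment. -/
def Y1 (St : Setting β dX p) (i : Fin St.n) : ℝ := Ypot St.n β St.Nb St.α i fun _ => 1

/-- Potential outcome under the all-zeros assignment. -/
def Y0 (St : Setting β dX p) (i : Fin St.n) : ℝ := Ypot St.n β St.Nb St.α i fun _ => 0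

/-- `S_XX = (1/n) ∑_i (X_i - X̄)(X_i - X̄)ᵀ`. -/
def SXX (St : Setting β dX p) : Matrix (Fin dX) (Fin dX) ℝ :=
  Matrix.of fun k l : Fin dX => (St.n : ℝ)⁻¹ * ∑ i,
    (St.X i k - (St.n : ℝ)⁻¹ * ∑ i', St.X i' k) * (St.X i l - (St.n : ℝ)⁻¹ * ∑ i', St.X i' l)

/-- `S_XY(1) = (1/n) ∑_i (X_i - X̄)(Y_i(1) - Ȳ_1)`. -/
def SXY1 (St : Setting β dX p) : Fin dX → ℝ := fun k => (St.n : ℝ)⁻¹ * ∑ i,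
  (St.X i k - (St.n : ℝ)⁻¹ * ∑ i', St.X i' k) * (St.Y1 i - (St.n : ℝ)⁻¹ * ∑ i', St.Y1 i')

/-- `S_XY(0) = (1/n) ∑_i (X_i - X̄)(Y_i(0) - Ȳ_0)`. -/
def SXY0 (St : Setting β dX p) : Fin dX → ℝ := fun k => (St.n : ℝ)⁻¹ * ∑ i,
  (St.X i k - (St.n : ℝ)⁻¹ * ∑ i', St.X i' k) * (St.Y0 i - (St.n : ℝ)⁻¹ * ∑ i', St.Y0 i')

/-- `θ_Lin = (1-p₁) S_XX⁻¹ S_XY(1) + p₁ S_XX⁻¹ S_XY(0)`. -/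
def thetaLin (St : Setting β dX p) (p1 : ℝ) : Fin dX → ℝ := fun k =>
  (1 - p1) * Matrix.mulVec St.SXX⁻¹ St.SXY1 k + p1 * Matrix.mulVec St.SXX⁻¹ St.SXY0 k

/-- The OLS slope coefficient of `Y` on `X` (regression with an intercept) within group `G`. -/
def olsSlope (St : Setting β dX p) (G : Finset (Fin St.n)) (x : St.Ω) : Fin dX → ℝ :=
  Matrix.mulVec
    (Matrix.of fun k l : Fin dX =>
      ∑ i ∈ G, (St.X i k - (G.card : ℝ)⁻¹ * ∑ i' ∈ G, St.X i' k) *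
               (St.X i l - (G.card : ℝ)⁻¹ * ∑ i' ∈ G, St.X i' l))⁻¹
    fun k => ∑ i ∈ G, (St.X i k - (G.card : ℝ)⁻¹ * ∑ i' ∈ G, St.X i' k) *
               (St.Yo i x - (G.card : ℝ)⁻¹ * ∑ i' ∈ G, St.Yo i' x)

/-- Lin's adjustment coefficient estimator
`θ̂_Lin = ((1/n)∑(1-Z_i)) θ̂_1 + ((1/n)∑ Z_i) θ̂_0`. -/
def thetaHatLin (St : Setting β dX p) (x : St.Ω) : Fin dX → ℝ := fun k =>
  ((St.n : ℝ)⁻¹ * ∑ i, (1 - St.Z i x)) *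
      St.olsSlope (univ.filter fun i => St.Z i x = 1) x k +
    ((St.n : ℝ)⁻¹ * ∑ i, St.Z i x) *
      St.olsSlope (univ.filter fun i => St.Z i x = 0) x k

/-- Assumption 3 (boundedness): `X_max ≤ C` and `Y_max ≤ C`. -/
def Assumption3 (St : Setting β dX p) (C : ℝ) : Prop :=
  (∀ i, (∑ k, |St.X i k|) ≤ C) ∧ ∀ i, (∑ s ∈ Sb St.n β St.Nb i, |St.α i s|) ≤ C

/-- Assumption 4 (invertibility): the smallest eigenvalues of `(1/n) XᵀX` and `(1/n) XᵀMX`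
are bounded below by `c`. -/
def Assumption4 (St : Setting β dX p) (c : ℝ) : Prop :=
  (∀ v : Fin dX → ℝ, c * (∑ k, v k ^ 2) ≤
      ∑ k, ∑ l, v k * ((St.n : ℝ)⁻¹ * ∑ i, St.X i k * St.X i l) * v l) ∧
    ∀ v : Fin dX → ℝ, c * (∑ k, v k ^ 2) ≤ ∑ k, ∑ l, v k * St.XtMX k l * v l

/-- All in-degrees and out-degrees of the interference network are at most `D`. -/
def degBdd (St : Setting β dX p) (D : ℕ) : Prop :=
  (∀ i, (St.Nb i).card ≤ D) ∧ ∀ j, (univ.filter fun i => j ∈ St.Nb i).card ≤ D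

end Setting

/-- A sequence of (vector-valued) random variables, over a sequence of experimental settings,
converges to zero in probability. -/
def convInProbToZero {β dX : ℕ} {p : ℝ} (S : ℕ → Setting β dX p)
    (f : ∀ m, (S m).Ω → Fin dX → ℝ) : Prop :=
  ∀ ε : ℝ, 0 < ε →
    Filter.Tendsto (fun m => (S m).μ {x | ε ≤ l2 (f m x)}) Filter.atTop (nhds (0 : ENNReal))

end SNIPE

open MeasureTheory ProbabilityTheory Filter Finset Topology SNIPE

/-!
Each coefficient estimator is unbiased, `E[α̂_{i,S}] = α_{i,S}`. Expanding `Y_i` in the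
interaction model, independence gives
`E[∏_{j∈S'} Z_j ∏_{l∈U} (p_l - Z_l)/(1 - p_l)] = [U ⊆ S'] (-1)^{|U|} ∏_{j∈S'} p_j`,
and the alternating sum over `S ⊆ U ⊆ S'` vanishes unless `S' = S`.
Since the vectors `E[(1/n) ∑_{i'} ω_i ω_{i'} X_{i'} ∏_{k∈S} Z_k]` in `θ̂_VIM` are deterministic,
`E[θ̂_VIM] = G⁻¹ (1/n) ∑_i ∑_S α_{i,S} E[…]` by linearity. The relation
`N_i ∩ N_{i'} ≠ ∅` is symmetric, so swapping `i` and `i'` in `θ_VIM` and expanding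
`Y_i = ∑_S α_{i,S} ∏_{k∈S} Z_k` produces the same expression.
-/

namespace Finset

theorem sum_Icc_neg_one_pow_card {α R : Type*} [DecidableEq α] [CommRing R] (s t : Finset α) :
    ∑ u ∈ Icc s t, (-1 : R) ^ #u = if s = t then (-1) ^ #s else 0 := by
  by_cases hst : s ⊆ t
  · have hdisj : ∀ v ∈ (t \ s).powerset, Disjoint s v := fun v hv =>
      disjoint_sdiff.mono_right (mem_powerset.1 hv)
    have hsum : ∑ v ∈ (t \ s).powerset, (-1 : R) ^ #v = if t \ s = ∅ then 1 else 0 := by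
      have := congrArg (Int.cast (R := R)) (sum_powerset_neg_one_pow_card (x := t \ s))
      push_cast at this
      exact this
    rw [Icc_eq_image_powerset hst, sum_image fun v hv w hw h => by
      rw [← union_sdiff_cancel_left (hdisj v hv), h, union_sdiff_cancel_left (hdisj w hw)]]
    rw [sum_congr rfl fun v hv => by rw [card_union_of_disjoint (hdisj v hv), pow_add],
      ← mul_sum, hsum]
    have hiff : t \ s = ∅ ↔ s = t := by
      rw [sdiff_eq_empty_iff_subset]
      exact ⟨subset_antisymm hst, fun h => h ▸ subset_rfl⟩
    simp only [hiff, mul_ite, mul_one, mul_zero]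
  · rw [Icc_eq_empty (by exact hst), sum_empty, if_neg (by rintro rfl; exact hst subset_rfl)]

end Finset

lemma eq_add_mul_of_zero_or_one {z : ℝ} (hz : z = 0 ∨ z = 1) (φ : ℝ → ℝ) :
    φ z = φ 0 + (φ 1 - φ 0) * z := by
  rcases hz with rfl | rfl <;> ring

namespace ProbabilityTheory

variable {Ω ι : Type*} [MeasurableSpace Ω] {μ : Measure Ω}

lemma integrable_comp_of_zero_or_one [IsFiniteMeasure μ] [Fintype ι] {Z : ι → Ω → ℝ}
    (hm : ∀ i, Measurable (Z i)) (h01 : ∀ i x, Z i x = 0 ∨ Z i x = 1)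
    {F : (ι → ℝ) → ℝ} (hF : Measurable F) : Integrable (fun x => F fun i => Z i x) μ := by
  classical
  let T := Fintype.piFinset fun _ : ι => ({0, 1} : Finset ℝ)
  refine .of_bound (hF.comp (measurable_pi_lambda _ hm)).aestronglyMeasurable
    (∑ g ∈ T, |F g|) (ae_of_all _ fun x => ?_)
  have hx : (fun i => Z i x) ∈ T := Fintype.mem_piFinset.2 fun i => by
    rcases h01 i x with h | h <;> simp [h]
  exact single_le_sum (f := fun g => |F g|) (fun g _ => abs_nonneg _) hx

lemma integral_comp_of_zero_or_one [IsProbabilityMeasure μ] {Z : Ω → ℝ} (hm : Measurable Z)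
    (h01 : ∀ x, Z x = 0 ∨ Z x = 1) (φ : ℝ → ℝ) :
    ∫ x, φ (Z x) ∂μ = (1 - ∫ x, Z x ∂μ) * φ 0 + (∫ x, Z x ∂μ) * φ 1 := by
  have hZ : Integrable Z μ := .of_bound hm.aestronglyMeasurable 1 (ae_of_all _ fun x => by
    rcases h01 x with h | h <;> simp [h])
  rw [integral_congr_ae (ae_of_all _ fun x => eq_add_mul_of_zero_or_one (h01 x) φ),
    integral_add (integrable_const _) (hZ.const_mul _), integral_const_mul]
  simp only [integral_const, probReal_univ, smul_eq_mul, one_mul]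
  ring

lemma iIndepFun.integral_prod_comp_of_zero_or_one [IsProbabilityMeasure μ] [Fintype ι]
    {Z : ι → Ω → ℝ} (hind : iIndepFun Z μ) (hm : ∀ i, Measurable (Z i))
    (h01 : ∀ i x, Z i x = 0 ∨ Z i x = 1) (φ : ι → ℝ → ℝ) :
    ∫ x, ∏ i, φ i (Z i x) ∂μ = ∏ i, ((1 - ∫ x, Z i x ∂μ) * φ i 0 + (∫ x, Z i x ∂μ) * φ i 1) :=
  calc ∫ x, ∏ i, φ i (Z i x) ∂μ = ∫ x, ∏ i, (φ i 0 + (φ i 1 - φ i 0) * Z i x) ∂μ :=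
        integral_congr_ae (ae_of_all _ fun x =>
          prod_congr rfl fun i _ => eq_add_mul_of_zero_or_one (h01 i x) (φ i))
    _ = ∏ i, ∫ x, (φ i 0 + (φ i 1 - φ i 0) * Z i x) ∂μ :=
        hind.integral_fun_prod_comp (f := fun i z => φ i 0 + (φ i 1 - φ i 0) * z)
          (fun i => (hm i).aemeasurable) (fun i => by fun_prop)
    _ = _ := prod_congr rfl fun i _ => by
        rw [integral_comp_of_zero_or_one (hm i) (h01 i) fun z => φ i 0 + (φ i 1 - φ i 0) * z]
        ring

end ProbabilityTheory

open Matrix in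
lemma MeasureTheory.integral_mulVec_apply {Ω m l : Type*} [MeasurableSpace Ω] {μ : Measure Ω}
    [Fintype l] (A : Matrix m l ℝ) {v : Ω → l → ℝ} (hv : ∀ j, Integrable (fun x => v x j) μ)
    (k : m) : ∫ x, (A *ᵥ v x) k ∂μ = (A *ᵥ fun j => ∫ x, v x j ∂μ) k := by
  simp only [Matrix.mulVec, dotProduct]
  rw [integral_finsetSum _ fun j _ => (hv j).const_mul _]
  exact sum_congr rfl fun j _ => integral_const_mul _ _

namespace SNIPE

lemma filter_Sb_eq_Icc {n β : ℕ} {Nb : Fin n → Finset (Fin n)} {i : Fin n}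
    {s s' : Finset (Fin n)} (hs' : s' ∈ Sb n β Nb i) :
    ((Sb n β Nb i).filter (s ⊆ ·)).filter (· ⊆ s') = Icc s s' := by
  simp only [Sb, mem_filter, mem_powerset] at hs'
  ext u
  simp only [Sb, mem_filter, mem_powerset, mem_Icc]
  exact ⟨fun h => ⟨h.1.2, h.2⟩, fun h =>
    ⟨⟨⟨h.2.trans hs'.1, (card_le_card h.2).trans hs'.2⟩, h.1⟩, h.2⟩⟩

namespace Setting

variable {β dX : ℕ} {p : ℝ} (St : Setting β dX p)

lemma prob_pos (hp : 0 < p) (j : Fin St.n) : 0 < St.prob j :=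
  hp.trans_le (St.prob_mem j).1

lemma prob_lt_one (hp : 0 < p) (j : Fin St.n) : St.prob j < 1 :=
  (St.prob_mem j).2.trans_lt (by linarith)

lemma integral_Z (hp : 0 ≤ p) (j : Fin St.n) : ∫ x, St.Z j x ∂St.μ = St.prob j := by
  have hZ : St.Z j = (St.Z j ⁻¹' {1}).indicator 1 := by
    funext x
    rcases St.Z_range j x with h | h <;> simp [h]
  rw [hZ, integral_indicator_one (St.Z_meas j (measurableSet_singleton 1)), measureReal_def,
    St.Z_prob, ENNReal.toReal_ofReal (hp.trans (St.prob_mem j).1)]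

lemma integrable_comp_Z {F : (Fin St.n → ℝ) → ℝ} (hF : Measurable F) :
    Integrable (fun x => F fun j => St.Z j x) St.μ :=
  have := St.isProb
  integrable_comp_of_zero_or_one St.Z_meas St.Z_range hF

lemma integral_prod_Z_mul_prod_centered (hp : 0 < p) (s u : Finset (Fin St.n)) :
    ∫ x, (∏ j ∈ s, St.Z j x) * ∏ l ∈ u, (St.prob l - St.Z l x) / (1 - St.prob l) ∂St.μ =
      if u ⊆ s then (-1) ^ #u * ∏ j ∈ s, St.prob j else 0 := by
  classical
  have := St.isProb
  let φ : Fin St.n → ℝ → ℝ := fun j z =>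
    (if j ∈ s then z else 1) * if j ∈ u then (St.prob j - z) / (1 - St.prob j) else 1
  have hfactor : ∀ j, (1 - St.prob j) * φ j 0 + St.prob j * φ j 1 =
      (if j ∈ s then St.prob j else 1) * if j ∈ u then (if j ∈ s then -1 else 0) else 1 := by
    intro j
    have : 1 - St.prob j ≠ 0 := sub_ne_zero.2 (St.prob_lt_one hp j).ne'
    simp only [φ]
    split_ifs <;> field_simp <;> ring
  calc _ = ∫ x, ∏ j, φ j (St.Z j x) ∂St.μ := by
        simp only [φ, prod_mul_distrib, prod_ite_mem, univ_inter]
    _ = _ := by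
        rw [St.Z_indep.integral_prod_comp_of_zero_or_one St.Z_meas St.Z_range]
        simp only [St.integral_Z hp.le, hfactor]
        rw [prod_mul_distrib, prod_ite_mem, prod_ite_mem, univ_inter, univ_inter, prod_ite_zero,
          prod_const]
        simp only [← subset_iff, mul_ite, mul_zero, mul_comm]

lemma integral_ahat (hp : 0 < p) {i : Fin St.n} {s : Finset (Fin St.n)}
    (hs : s ∈ Sb St.n β St.Nb i) : ∫ x, St.ahat i s x ∂St.μ = St.α i s := by
  classical
  set F := (Sb St.n β St.Nb i).filter (s ⊆ ·)
  set c := ∏ j ∈ s, (-1 / St.prob j)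
  have hexpand : ∀ x, St.ahat i s x = c * ∑ s' ∈ Sb St.n β St.Nb i, St.α i s' *
      ∑ u ∈ F, (∏ j ∈ s', St.Z j x) * ∏ l ∈ u, (St.prob l - St.Z l x) / (1 - St.prob l) := by
    intro x
    rw [ahat, alphaHat, Yo, Ypot, mul_right_comm, mul_comm _ c, sum_mul]
    congr 1
    exact sum_congr rfl fun _ _ => by rw [mul_assoc, mul_sum]
  have hint : ∀ s' u : Finset (Fin St.n), Integrable (fun x =>
      (∏ j ∈ s', St.Z j x) * ∏ l ∈ u, (St.prob l - St.Z l x) / (1 - St.prob l)) St.μ :=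
    fun s' u => St.integrable_comp_Z (F := fun z =>
      (∏ j ∈ s', z j) * ∏ l ∈ u, (St.prob l - z l) / (1 - St.prob l)) (by fun_prop)
  have hinner : ∀ s' ∈ Sb St.n β St.Nb i,
      ∑ u ∈ F, (if u ⊆ s' then (-1) ^ #u * ∏ j ∈ s', St.prob j else 0) =
        if s = s' then (-1) ^ #s * ∏ j ∈ s, St.prob j else 0 := by
    intro s' hs'
    rw [← sum_filter, filter_Sb_eq_Icc hs', ← sum_mul, sum_Icc_neg_one_pow_card]
    split_ifs with h
    · rw [h]
    · rw [zero_mul]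
  have hc : c * ((-1) ^ #s * ∏ j ∈ s, St.prob j) = 1 := by
    rw [← prod_const, ← prod_mul_distrib, ← prod_mul_distrib]
    exact prod_eq_one fun j _ => by field_simp [(St.prob_pos hp j).ne']
  rw [integral_congr_ae (ae_of_all _ hexpand), integral_const_mul, integral_finsetSum _
    fun s' _ => (integrable_finsetSum _ fun u _ => hint s' u).const_mul _]
  calc c * ∑ s' ∈ Sb St.n β St.Nb i, ∫ x, St.α i s' * ∑ u ∈ F, (∏ j ∈ s', St.Z j x) *
          ∏ l ∈ u, (St.prob l - St.Z l x) / (1 - St.prob l) ∂St.μ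
      = c * ∑ s' ∈ Sb St.n β St.Nb i,
          if s = s' then St.α i s' * ((-1) ^ #s * ∏ j ∈ s, St.prob j) else 0 := by
        congr 1
        refine sum_congr rfl fun s' hs' => ?_
        rw [integral_const_mul, integral_finsetSum _ fun u _ => hint s' u,
          sum_congr rfl fun u _ => St.integral_prod_Z_mul_prod_centered hp s' u,
          hinner s' hs', mul_ite, mul_zero]
    _ = St.α i s := by rw [sum_ite_eq, if_pos hs, mul_left_comm, hc, mul_one]

lemma mem_nbrs_comm {i i' : Fin St.n} : i' ∈ St.nbrs i ↔ i ∈ St.nbrs i' := by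
  simp only [nbrs, mem_filter, mem_univ, true_and, inter_comm]

lemma sum_nbrs_comm (F : Fin St.n → Fin St.n → ℝ) :
    ∑ i, ∑ i' ∈ St.nbrs i, F i i' = ∑ i, ∑ i' ∈ St.nbrs i, F i' i :=
  sum_comm' fun i i' => by simp only [mem_univ, true_and, and_true, St.mem_nbrs_comm]

lemma integrable_ahat (i : Fin St.n) (s : Finset (Fin St.n)) :
    Integrable (St.ahat i s) St.μ :=
  St.integrable_comp_Z (F := fun z => alphaHat St.n β St.Nb St.prob
    (Ypot St.n β St.Nb St.α i z) i s z) (by unfold alphaHat Ypot; fun_prop)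

lemma integrable_vimE_integrand (i : Fin St.n) (s : Finset (Fin St.n)) (k : Fin dX) :
    Integrable (fun x => (St.n : ℝ)⁻¹ *
      ∑ i' ∈ St.nbrs i, St.w i x * St.w i' x * St.X i' k * ∏ t ∈ s, St.Z t x) St.μ :=
  St.integrable_comp_Z (F := fun z => (St.n : ℝ)⁻¹ * ∑ i' ∈ St.nbrs i,
    wt St.n β St.Nb St.prob i z * wt St.n β St.Nb St.prob i' z * St.X i' k * ∏ t ∈ s, z t)
    (by unfold wt; fun_prop)

lemma integral_sum_ahat_mul (hp : 0 < p) (c : Fin St.n → Finset (Fin St.n) → ℝ) :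
    ∫ x, ∑ i, ∑ s ∈ Sb St.n β St.Nb i, St.ahat i s x * c i s ∂St.μ =
      ∑ i, ∑ s ∈ Sb St.n β St.Nb i, St.α i s * c i s := by
  rw [integral_finsetSum _ fun i _ =>
    integrable_finsetSum _ fun s _ => (St.integrable_ahat i s).mul_const _]
  refine sum_congr rfl fun i _ => ?_
  rw [integral_finsetSum _ fun s _ => (St.integrable_ahat i s).mul_const _]
  exact sum_congr rfl fun s hs => by rw [integral_mul_const, St.integral_ahat hp hs]

lemma sum_nbrs_mul_Yo (x : St.Ω) (k : Fin dX) :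
    ∑ i, ∑ i' ∈ St.nbrs i, St.w i x * St.w i' x * St.X i k * St.Yo i' x =
      ∑ i, ∑ s ∈ Sb St.n β St.Nb i, St.α i s *
        ∑ i' ∈ St.nbrs i, St.w i x * St.w i' x * St.X i' k * ∏ t ∈ s, St.Z t x := by
  rw [St.sum_nbrs_comm]
  refine sum_congr rfl fun i _ => ?_
  simp only [Yo, Ypot, mul_sum]
  rw [sum_comm]
  exact sum_congr rfl fun s _ => sum_congr rfl fun i' _ => by ring

lemma E_sum_nbrs_mul_Yo (k : Fin dX) :
    St.E (fun x => ((St.n : ℝ) ^ 2)⁻¹ *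
        ∑ i, ∑ i' ∈ St.nbrs i, St.w i x * St.w i' x * St.X i k * St.Yo i' x) =
      (St.n : ℝ)⁻¹ * ∑ i, ∑ s ∈ Sb St.n β St.Nb i, St.α i s * St.vimE i s k := by
  have hpt : ∀ x, ((St.n : ℝ) ^ 2)⁻¹ *
      ∑ i, ∑ i' ∈ St.nbrs i, St.w i x * St.w i' x * St.X i k * St.Yo i' x =
      (St.n : ℝ)⁻¹ * ∑ i, ∑ s ∈ Sb St.n β St.Nb i, St.α i s * ((St.n : ℝ)⁻¹ *
        ∑ i' ∈ St.nbrs i, St.w i x * St.w i' x * St.X i' k * ∏ t ∈ s, St.Z t x) := by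
    intro x
    rw [St.sum_nbrs_mul_Yo, pow_two, mul_inv, mul_assoc, mul_sum]
    refine congrArg _ (sum_congr rfl fun i _ => ?_)
    rw [mul_sum]
    exact sum_congr rfl fun s _ => by ring
  rw [E, integral_congr_ae (ae_of_all _ hpt), integral_const_mul, integral_finsetSum _ fun i _ =>
    integrable_finsetSum _ fun s _ => (St.integrable_vimE_integrand i s k).const_mul _]
  congr 1
  refine sum_congr rfl fun i _ => ?_
  rw [integral_finsetSum _ fun s _ => (St.integrable_vimE_integrand i s k).const_mul _]
  exact sum_congr rfl fun s _ => integral_const_mul _ _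

end Setting

end SNIPE

theorem statement_9_general (β dX : ℕ) (p : ℝ) (hp : 0 < p) (St : SNIPE.Setting β dX p) :
    (fun k => St.E fun x => St.thetaHatVIM x k) = St.thetaVIM := by
  funext k
  unfold Setting.thetaHatVIM Setting.thetaVIM
  rw [Setting.E, integral_mulVec_apply _ fun j => (integrable_finsetSum _ fun i _ =>
    integrable_finsetSum _ fun s _ => (St.integrable_ahat i s).mul_const _).const_mul _]
  congr 2
  funext j
  rw [integral_const_mul, St.integral_sum_ahat_mul hp, St.E_sum_nbrs_mul_Yo]

/-- if `G` is invertible then the VIM adjustment coefficient estimator is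
unbiased for its population counterpart: `E[θ̂_VIM] = θ_VIM`. -/
theorem statement_9 (β dX : ℕ) (hβ : 1 ≤ β) (p : ℝ) (hp : 0 < p) (hp' : p ≤ 1 / 2)
    (St : SNIPE.Setting β dX p) (hG : IsUnit St.Gmat) :
    (fun k => St.E fun x => St.thetaHatVIM x k) = St.thetaVIM :=
  statement_9_general β dX p hp St
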